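/- Suppose ‖x^(i)‖₂ ≤ 1 for all i ∈ [n] and Assumption I holds with constant a ∈ (0,1). Then (1/n)·Σ_{i=1}^n E_{y ~ N(⟨w*,x^(i)⟩,1,S)}[(y − ⟨w*,x^(i)⟩)²] · ‖x^(i)‖₂² ≤ 2·log(1/a) + 4. -/

import Mathlib

/-!
Let `ν = N(0,1)` with density `φ` and `α = ν(S)`. With `s² = 2 log(1/α) + 2`, the integral of
`z² - s²` over `S` is at most its integral over the tails `{|z| > s}`, where the integrand is
nonnegative; each tail contributes at most `φ(s)`, and `φ(s) ≤ exp(-s²/2) = α/e`. Hence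
`∫_S z² dν ≤ (2 log(1/α) + 4) α`: after translation, every truncated Gaussian `N(μ,1,S)` has second
central moment at most `2 log(1/α(μ;S)) + 4`. Weighting by `‖xⁱ‖²` and summing Assumption I over an
orthonormal basis (taking traces) bounds `∑ᵢ log(1/αᵢ) ‖xⁱ‖²` by `log(1/a) ∑ᵢ ‖xⁱ‖² ≤ n log(1/a)`.
-/

open MeasureTheory ProbabilityTheory Real
open scoped RealInnerProductSpace ENNReal

/-- The survival probability `α(μ; S) = N(μ,1)(S)`. -/
noncomputable def survival (μ : ℝ) (S : Set ℝ) : ℝ :=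
  (gaussianReal μ 1 S).toReal

/-- The truncated Gaussian `N(μ,1,S)`, i.e. `N(μ,1)` conditioned on `S`. -/
noncomputable def truncGaussian (μ : ℝ) (S : Set ℝ) : Measure ℝ :=
  (gaussianReal μ 1)[|S]

/-- Assumption I (constant survival probability), stated in the Loewner order via
quadratic forms: `∑ᵢ log(1/α(w*,xⁱ;S)) xⁱ xⁱᵀ ⪯ log(1/a) ∑ᵢ xⁱ xⁱᵀ`. -/
def AssumptionI {k n : ℕ} (S : Set ℝ) (x : Fin n → EuclideanSpace ℝ (Fin k))
    (wstar : EuclideanSpace ℝ (Fin k)) (a : ℝ) : Prop :=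
  ∀ v : EuclideanSpace ℝ (Fin k),
    ∑ i, Real.log (1 / survival ⟪wstar, x i⟫ S) * ⟪v, x i⟫ ^ 2 ≤
      Real.log (1 / a) * ∑ i, ⟪v, x i⟫ ^ 2

open Filter Set Topology
open scoped NNReal

lemma gaussianPDFReal_zero_one (z : ℝ) :
    gaussianPDFReal 0 1 z = (√(2 * π))⁻¹ * exp (-z ^ 2 / 2) := by
  simp [gaussianPDFReal]

lemma gaussianPDFReal_zero_one_le_exp (z : ℝ) : gaussianPDFReal 0 1 z ≤ exp (-z ^ 2 / 2) := by
  rw [gaussianPDFReal_zero_one]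
  have h2π : 1 ≤ √(2 * π) := one_le_sqrt.mpr (by linarith [pi_gt_three])
  exact mul_le_of_le_one_left (exp_nonneg _) (inv_le_one_of_one_le₀ h2π)

lemma hasDerivAt_gaussianPDFReal_zero_one (z : ℝ) :
    HasDerivAt (gaussianPDFReal 0 1) (-z * gaussianPDFReal 0 1 z) z := by
  have h : HasDerivAt (fun z : ℝ => -z ^ 2 / 2) (-z) z := by
    refine (((hasDerivAt_pow 2 z).neg).div_const 2).congr_deriv ?_
    ring
  rw [show gaussianPDFReal 0 1 = fun z => (√(2 * π))⁻¹ * exp (-z ^ 2 / 2) from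
    funext gaussianPDFReal_zero_one]
  exact (h.exp.const_mul _).congr_deriv (by ring)

lemma tendsto_mul_gaussianPDFReal_zero_one_atTop :
    Tendsto (fun z => z * gaussianPDFReal 0 1 z) atTop (𝓝 0) := by
  have h := (rpow_mul_exp_neg_mul_sq_isLittleO_exp_neg (b := 1 / 2) (by norm_num) 1).trans_tendsto
    (tendsto_exp_atBot.comp (tendsto_id.const_mul_atTop_of_neg (by norm_num : -(1 / 2 : ℝ) < 0)))
  convert h.const_mul (√(2 * π))⁻¹ using 2 with z
  · rw [gaussianPDFReal_zero_one, rpow_one]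
    ring_nf
  · simp

lemma hasDerivAt_mul_one_sub_div_mul_gaussianPDFReal (K z : ℝ) :
    HasDerivAt (fun z => z * (1 - K / (z ^ 2 + 1)) * gaussianPDFReal 0 1 z)
      (-(z ^ 2 - (K + 1) + 2 * K / (z ^ 2 + 1) ^ 2) * gaussianPDFReal 0 1 z) z := by
  have hz : z ^ 2 + 1 ≠ 0 := by positivity
  have h := (hasDerivAt_const z K).fun_div ((hasDerivAt_pow 2 z).add_const 1) hz
  refine ((((hasDerivAt_id' z).fun_mul ((hasDerivAt_const z 1).fun_sub h)).fun_mul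
    (hasDerivAt_gaussianPDFReal_zero_one z))).congr_deriv ?_
  field_simp
  ring

lemma setIntegral_Ioi_gaussianPDFReal_mul_sq_sub_sq_le {s : ℝ} (hs : 1 ≤ s) :
    ∫ z in Ioi s, gaussianPDFReal 0 1 z * (z ^ 2 - s ^ 2) ≤ gaussianPDFReal 0 1 s := by
  -- `-F'` dominates the integrand and `F s = 2 s φ(s) / (s² + 1)`: this is the Mills-ratio
  -- bound `P(Z > s) ≥ s φ(s) / (s² + 1)` in disguise.
  set K := s ^ 2 - 1 with hK
  have hK0 : 0 ≤ K := by nlinarith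
  set F := fun z => z * (1 - K / (z ^ 2 + 1)) * gaussianPDFReal 0 1 z
  set F' := fun z => -(z ^ 2 - (K + 1) + 2 * K / (z ^ 2 + 1) ^ 2) * gaussianPDFReal 0 1 z
  have hF : ∀ z ∈ Ici s, HasDerivAt F (F' z) z := fun z _ =>
    hasDerivAt_mul_one_sub_div_mul_gaussianPDFReal K z
  have hF'_le : ∀ z ∈ Ioi s, gaussianPDFReal 0 1 z * (z ^ 2 - s ^ 2) ≤ -F' z := by
    intro z hz
    have : 0 ≤ 2 * K / (z ^ 2 + 1) ^ 2 * gaussianPDFReal 0 1 z :=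
      mul_nonneg (by positivity) (gaussianPDFReal_nonneg _ _ _)
    simp only [F', hK]
    linarith
  have hnonneg : ∀ z ∈ Ioi s, 0 ≤ gaussianPDFReal 0 1 z * (z ^ 2 - s ^ 2) := fun z hz =>
    mul_nonneg (gaussianPDFReal_nonneg _ _ _) (by nlinarith [mem_Ioi.mp hz])
  have hF'_nonpos : ∀ z ∈ Ioi s, F' z ≤ 0 := fun z hz => by
    linarith [hF'_le z hz, hnonneg z hz]
  have hF_tendsto : Tendsto F atTop (𝓝 0) := by
    have h : Tendsto (fun z : ℝ => 1 - K / (z ^ 2 + 1)) atTop (𝓝 (1 - 0)) :=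
      tendsto_const_nhds.sub (tendsto_const_nhds.div_atTop
        (tendsto_atTop_add_const_right _ 1 (tendsto_pow_atTop two_ne_zero)))
    simpa [F, mul_right_comm] using tendsto_mul_gaussianPDFReal_zero_one_atTop.mul h
  have hFs : F s ≤ gaussianPDFReal 0 1 s := by
    have h : s * (1 - K / (s ^ 2 + 1)) = 2 * s / (s ^ 2 + 1) := by
      rw [hK]
      field_simp
      ring
    refine mul_le_of_le_one_left (gaussianPDFReal_nonneg _ _ _) ?_
    rw [h, div_le_one (by positivity)]
    nlinarith [sq_nonneg (s - 1)]
  calc ∫ z in Ioi s, gaussianPDFReal 0 1 z * (z ^ 2 - s ^ 2)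
      ≤ ∫ z in Ioi s, -F' z :=
        setIntegral_mono_of_nonneg hnonneg hF'_le
          (integrableOn_Ioi_deriv_of_nonpos' hF hF'_nonpos hF_tendsto).neg
    _ = F s := by
      rw [integral_neg, integral_Ioi_of_hasDerivAt_of_nonpos' hF hF'_nonpos hF_tendsto]
      ring
    _ ≤ gaussianPDFReal 0 1 s := hFs

lemma setIntegral_gaussianReal_eq_setIntegral_smul {E : Type*} [NormedAddCommGroup E]
    [NormedSpace ℝ E] {μ : ℝ} {v : ℝ≥0} (hv : v ≠ 0) (T : Set ℝ) (f : ℝ → E) :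
    ∫ z in T, f z ∂gaussianReal μ v = ∫ z in T, gaussianPDFReal μ v z • f z := by
  rw [gaussianReal_of_var_ne_zero _ hv, setIntegral_withDensity_eq_setIntegral_toReal_smul' T
    (measurable_gaussianPDF μ v) (ae_of_all _ fun _ => gaussianPDF_lt_top)]
  simp

lemma integrable_sq_sub_const_gaussianReal (μ : ℝ) (v : ℝ≥0) (c : ℝ) :
    Integrable (fun z => z ^ 2 - c) (gaussianReal μ v) :=
  (memLp_id_gaussianReal' 2 (by norm_num)).integrable_sq.sub (integrable_const c)

lemma setIntegral_Iio_neg_union_Ioi_sq_sub_sq_gaussianReal_le {s : ℝ} (hs : 1 ≤ s) :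
    ∫ z in Iio (-s) ∪ Ioi s, (z ^ 2 - s ^ 2) ∂gaussianReal 0 1 ≤ 2 * gaussianPDFReal 0 1 s := by
  have hint := integrable_sq_sub_const_gaussianReal 0 1 (s ^ 2)
  have hright : ∫ z in Ioi s, (z ^ 2 - s ^ 2) ∂gaussianReal 0 1 ≤ gaussianPDFReal 0 1 s := by
    simpa [setIntegral_gaussianReal_eq_setIntegral_smul one_ne_zero]
      using setIntegral_Ioi_gaussianPDFReal_mul_sq_sub_sq_le hs
  have hleft : ∫ z in Iio (-s), (z ^ 2 - s ^ 2) ∂gaussianReal 0 1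
      = ∫ z in Ioi s, (z ^ 2 - s ^ 2) ∂gaussianReal 0 1 := by
    have hneg : (gaussianReal 0 1).map (fun z => -z) = gaussianReal 0 1 := by
      simpa using gaussianReal_map_neg (μ := 0) (v := 1)
    conv_lhs => rw [← hneg]
    rw [setIntegral_map measurableSet_Iio (by fun_prop) measurable_neg.aemeasurable]
    simp [neg_preimage]
  have hdisj : Disjoint (Iio (-s)) (Ioi s) :=
    (Iio_disjoint_Ici (by linarith)).mono_right Ioi_subset_Ici_self
  rw [setIntegral_union hdisj measurableSet_Ioi hint.integrableOn hint.integrableOn, hleft]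
  linarith

lemma setIntegral_le_setIntegral_of_nonneg_of_nonpos {X : Type*} [MeasurableSpace X]
    {μ : Measure X} {f : X → ℝ} {S A : Set X} (hS : MeasurableSet S) (hA : MeasurableSet A)
    (hf : Integrable f μ) (hf_nonneg : ∀ x ∈ A, 0 ≤ f x) (hf_nonpos : ∀ x ∉ A, f x ≤ 0) :
    ∫ x in S, f x ∂μ ≤ ∫ x in A, f x ∂μ := by
  rw [← integral_indicator hS, ← integral_indicator hA]
  refine integral_mono (hf.indicator hS) (hf.indicator hA) fun x => ?_
  by_cases hxA : x ∈ A <;> by_cases hxS : x ∈ S <;>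
    simp [indicator, hxA, hxS, hf_nonneg, hf_nonpos]

lemma setIntegral_sq_gaussianReal_le_of_one_le {S : Set ℝ} (hS : MeasurableSet S) {s : ℝ}
    (hs : 1 ≤ s) :
    ∫ z in S, z ^ 2 ∂gaussianReal 0 1 ≤
      s ^ 2 * (gaussianReal 0 1).real S + 2 * gaussianPDFReal 0 1 s := by
  have hint := integrable_sq_sub_const_gaussianReal 0 1 (s ^ 2)
  have hsplit : ∫ z in S, z ^ 2 ∂gaussianReal 0 1 =
      ∫ z in S, (z ^ 2 - s ^ 2) ∂gaussianReal 0 1 + s ^ 2 * (gaussianReal 0 1).real S := by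
    rw [mul_comm, ← smul_eq_mul, ← setIntegral_const,
      ← integral_add hint.integrableOn (integrable_const _).integrableOn]
    simp
  have htails : ∫ z in S, (z ^ 2 - s ^ 2) ∂gaussianReal 0 1 ≤
      ∫ z in Iio (-s) ∪ Ioi s, (z ^ 2 - s ^ 2) ∂gaussianReal 0 1 := by
    refine setIntegral_le_setIntegral_of_nonneg_of_nonpos hS
      (measurableSet_Iio.union measurableSet_Ioi) hint (fun z hz => ?_) (fun z hz => ?_)
    · rcases hz with hz | hz <;> simp only [mem_Iio, mem_Ioi] at hz <;> nlinarith
    · simp only [mem_union, mem_Iio, mem_Ioi, not_or, not_lt] at hz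
      nlinarith
  linarith [setIntegral_Iio_neg_union_Ioi_sq_sub_sq_gaussianReal_le hs]

lemma log_one_div_nonneg_of_le_one {α : ℝ} (hα0 : 0 ≤ α) (hα1 : α ≤ 1) : 0 ≤ log (1 / α) := by
  rw [one_div, log_inv]
  exact neg_nonneg.mpr (log_nonpos hα0 hα1)

lemma setIntegral_sq_gaussianReal_le {S : Set ℝ} (hS : MeasurableSet S) :
    ∫ z in S, z ^ 2 ∂gaussianReal 0 1 ≤
      (2 * log (1 / (gaussianReal 0 1).real S) + 4) * (gaussianReal 0 1).real S := by
  rcases measureReal_nonneg.eq_or_lt with hα | hα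
  · rw [← hα, mul_zero, setIntegral_measure_zero _ ((measureReal_eq_zero_iff).mp hα.symm)]
  set α := (gaussianReal 0 1).real S
  set L := log (1 / α)
  have hL : 0 ≤ L := log_one_div_nonneg_of_le_one hα.le measureReal_le_one
  set s := √(2 * L + 2)
  have hs2 : s ^ 2 = 2 * L + 2 := sq_sqrt (by linarith)
  have hs1 : 1 ≤ s := one_le_sqrt.mpr (by linarith)
  have hφs : gaussianPDFReal 0 1 s ≤ α := calc
    gaussianPDFReal 0 1 s ≤ exp (-s ^ 2 / 2) := gaussianPDFReal_zero_one_le_exp s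
    _ = exp (log α - 1) := by
      rw [hs2, show L = -log α by simp [L, log_inv]]
      ring_nf
    _ ≤ exp (log α) := exp_le_exp.mpr (by linarith)
    _ = α := exp_log hα
  calc ∫ z in S, z ^ 2 ∂gaussianReal 0 1
      ≤ s ^ 2 * α + 2 * gaussianPDFReal 0 1 s := setIntegral_sq_gaussianReal_le_of_one_le hS hs1
    _ ≤ (2 * L + 4) * α := by rw [hs2]; linarith

lemma integral_sq_sub_truncGaussian_le (μ : ℝ) {S : Set ℝ} (hS : MeasurableSet S) :
    ∫ y, (y - μ) ^ 2 ∂truncGaussian μ S ≤ 2 * log (1 / survival μ S) + 4 := by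
  set S' := (μ + ·) ⁻¹' S
  have hS' : MeasurableSet S' := measurable_const_add μ hS
  have hmap : (gaussianReal 0 1).map (μ + ·) = gaussianReal μ 1 := by
    simpa using gaussianReal_map_const_add (μ := 0) (v := 1) μ
  have hsurv : survival μ S = (gaussianReal 0 1).real S' := by
    rw [survival, ← hmap, Measure.map_apply (measurable_const_add μ) hS]
    rfl
  have hmoment : ∫ y in S, (y - μ) ^ 2 ∂gaussianReal μ 1 = ∫ z in S', z ^ 2 ∂gaussianReal 0 1 := by
    rw [← hmap, setIntegral_map hS (by fun_prop) (measurable_const_add μ).aemeasurable]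
    simp [S']
  have hL := log_one_div_nonneg_of_le_one (α := survival μ S) ENNReal.toReal_nonneg
    (by rw [hsurv]; exact measureReal_le_one)
  rw [truncGaussian, ProbabilityTheory.cond, integral_smul_measure, ENNReal.toReal_inv, smul_eq_mul]
  refine inv_mul_le_of_le_mul₀ ENNReal.toReal_nonneg (by linarith) ?_
  rw [← survival, hmoment, hsurv, mul_comm]
  exact setIntegral_sq_gaussianReal_le hS'

lemma sum_mul_norm_sq_le_of_forall_sum_mul_inner_sq_le {ι E : Type*} [Fintype ι]
    [NormedAddCommGroup E] [InnerProductSpace ℝ E] [FiniteDimensional ℝ E]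
    {x : ι → E} {c : ι → ℝ} {r : ℝ}
    (h : ∀ v, ∑ i, c i * ⟪v, x i⟫ ^ 2 ≤ r * ∑ i, ⟪v, x i⟫ ^ 2) :
    ∑ i, c i * ‖x i‖ ^ 2 ≤ r * ∑ i, ‖x i‖ ^ 2 := by
  let b := stdOrthonormalBasis ℝ E
  calc ∑ i, c i * ‖x i‖ ^ 2 = ∑ j, ∑ i, c i * ⟪b j, x i⟫ ^ 2 := by
        simp_rw [← b.sum_sq_inner_right, Finset.mul_sum]
        exact Finset.sum_comm
    _ ≤ ∑ j, r * ∑ i, ⟪b j, x i⟫ ^ 2 := Finset.sum_le_sum fun j _ => h (b j)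
    _ = r * ∑ i, ‖x i‖ ^ 2 := by
        simp_rw [← b.sum_sq_inner_right, ← Finset.mul_sum]
        rw [Finset.sum_comm]

theorem stmt12 {k n : ℕ} (S : Set ℝ) (hS : MeasurableSet S)
    (x : Fin n → EuclideanSpace ℝ (Fin k)) (wstar : EuclideanSpace ℝ (Fin k))
    (a : ℝ) (ha0 : 0 < a) (ha1 : a < 1)
    (hx : ∀ i, ‖x i‖ ≤ 1)
    (hAI : AssumptionI S x wstar a) :
    (1 / n : ℝ) * ∑ i,
        (∫ y, (y - ⟪wstar, x i⟫) ^ 2 ∂(truncGaussian ⟪wstar, x i⟫ S)) * ‖x i‖ ^ 2 ≤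
      2 * Real.log (1 / a) + 4 := by
  have hloga : 0 ≤ log (1 / a) := log_one_div_nonneg_of_le_one ha0.le ha1.le
  have hnorm : ∑ i, ‖x i‖ ^ 2 ≤ n := by
    simpa using Finset.sum_le_sum fun i (_ : i ∈ Finset.univ) =>
      pow_le_one₀ (n := 2) (norm_nonneg (x i)) (hx i)
  rw [one_div]
  refine inv_mul_le_of_le_mul₀ n.cast_nonneg (by linarith) ?_
  calc ∑ i, (∫ y, (y - ⟪wstar, x i⟫) ^ 2 ∂(truncGaussian ⟪wstar, x i⟫ S)) * ‖x i‖ ^ 2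
      ≤ ∑ i, (2 * log (1 / survival ⟪wstar, x i⟫ S) + 4) * ‖x i‖ ^ 2 :=
        Finset.sum_le_sum fun i _ => mul_le_mul_of_nonneg_right
          (integral_sq_sub_truncGaussian_le _ hS) (sq_nonneg _)
    _ = 2 * ∑ i, log (1 / survival ⟪wstar, x i⟫ S) * ‖x i‖ ^ 2 + 4 * ∑ i, ‖x i‖ ^ 2 := by
        simp only [add_mul, Finset.sum_add_distrib, Finset.mul_sum, mul_assoc]
    _ ≤ (2 * log (1 / a) + 4) * ∑ i, ‖x i‖ ^ 2 := by
        linarith [sum_mul_norm_sq_le_of_forall_sum_mul_inner_sq_le hAI]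
    _ ≤ n * (2 * log (1 / a) + 4) := by
        rw [mul_comm]
        gcongr
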